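/- Fix a linear order ≺ on the set of words over an alphabet Σ such that for every word w the set {v | v ≺ w} is finite, let τ be a binary relation on words that is input-decreasing with respect to ≺, and let M be a finite language. If L ⊆ M is a τ-independent language, then there exists i ≥ 0 such that μ^i(L) is P_τ-maximal relative to M and contains L. -/

import Mathlib

open Set

/-- Image of a language under a binary word relation: τ(X) = {y | ∃ x ∈ X, τ(x,y)}. -/
def img {α : Type*} (τ : List α → List α → Prop) (X : Set (List α)) : Set (List α) :=
  {y | ∃ x ∈ X, τ x y}

/-- Inverse image: τ⁻¹(X) = {y | ∃ x ∈ X, τ(y,x)}. -/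
def pre {α : Type*} (τ : List α → List α → Prop) (X : Set (List α)) : Set (List α) :=
  {y | ∃ x ∈ X, τ y x}

/-- ind(X) = M \ (τ(X) ∪ τ⁻¹(X)). -/
def ind {α : Type*} (τ : List α → List α → Prop) (M X : Set (List α)) : Set (List α) :=
  M \ (img τ X ∪ pre τ X)

/-- The max-min operator μ(X) = ind(X) \ τ⁻¹(ind(X)). -/
def mu {α : Type*} (τ : List α → List α → Prop) (M X : Set (List α)) : Set (List α) :=
  ind τ M X \ pre τ (ind τ M X)

/-- σ_X(A) = τ⁻¹(A) ∩ ind(X). -/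
def sig {α : Type*} (τ : List α → List α → Prop) (M X A : Set (List α)) : Set (List α) :=
  pre τ A ∩ ind τ M X

/-- Φ^*(A) = ⋃_{i≥0} Φ^i(A). -/
def opStar {α : Type*} (Φ : Set (List α) → Set (List α)) (A : Set (List α)) : Set (List α) :=
  ⋃ i : ℕ, Φ^[i] A

/-- Φ^+(A) = ⋃_{i≥1} Φ^i(A). -/
def opPlus {α : Type*} (Φ : Set (List α) → Set (List α)) (A : Set (List α)) : Set (List α) :=
  ⋃ i ≥ 1, Φ^[i] A

/-- Φ^∩(A) = ⋂_{i≥1} Φ^i(A). -/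
def opInter {α : Type*} (Φ : Set (List α) → Set (List α)) (A : Set (List α)) : Set (List α) :=
  ⋂ i ≥ 1, Φ^[i] A

/-- Φ^{≥k}(A) = ⋃_{i≥k} Φ^i(A). -/
def opGe {α : Type*} (Φ : Set (List α) → Set (List α)) (k : ℕ) (A : Set (List α)) : Set (List α) :=
  ⋃ i ≥ k, Φ^[i] A

/-- A language is τ-independent if τ(L) ∩ L = ∅. -/
def indep {α : Type*} (τ : List α → List α → Prop) (L : Set (List α)) : Prop :=
  img τ L ∩ L = ∅

/-- τ is smooth (relative to M) if σ_X^∩(ind(X)) ⊆ σ_X^*(μ(X)) for every language X. -/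
def smooth {α : Type*} (τ : List α → List α → Prop) (M : Set (List α)) : Prop :=
  ∀ X : Set (List α), opInter (sig τ M X) (ind τ M X) ⊆ opStar (sig τ M X) (mu τ M X)

/-- L is P_τ-maximal relative to M: L ⊆ M, L is τ-independent, and no word of M \ L
can be added to L keeping τ-independence. -/
def maximalIndep {α : Type*} (τ : List α → List α → Prop) (M L : Set (List α)) : Prop :=
  L ⊆ M ∧ indep τ L ∧ ∀ w ∈ M \ L, ¬ indep τ (L ∪ {w})

/-! The iterates of `μ` starting from an independent `L ⊆ M` grow (an independent `X ⊆ M` satisfies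
`X ⊆ μ(X)`) inside the finite set `M`, so they reach a fixed point `K = μ(K)`. A fixed point is
maximal: a word of `M \ K` that could be added to `K` lies in `ind(K)`, and `ind(K) ⊆ K` because
`ind(K) \ μ(K) ⊆ τ⁻¹(ind(K))` while `τ`, being input-decreasing, is well founded on the finite `M`. -/

section Independence

variable {α : Type*} {τ : List α → List α → Prop} {M X K L : Set (List α)}

theorem indep_iff : indep τ L ↔ ∀ x ∈ L, ∀ y ∈ L, ¬ τ x y := by
  simp only [indep, img, Set.eq_empty_iff_forall_notMem, Set.mem_inter_iff]
  exact ⟨fun h x hx y hy hxy => h y ⟨⟨x, hx, hxy⟩, hy⟩, fun h y ⟨⟨x, hx, hxy⟩, hy⟩ => h x hx y hy hxy⟩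

theorem mem_ind_of_indep {w : List α} {Y : Set (List α)} (hwM : w ∈ M) (hY : indep τ Y)
    (hwY : w ∈ Y) (hXY : X ⊆ Y) : w ∈ ind τ M X := by
  refine ⟨hwM, ?_⟩
  rintro (⟨x, hx, hxw⟩ | ⟨x, hx, hwx⟩)
  · exact indep_iff.1 hY x (hXY hx) w hwY hxw
  · exact indep_iff.1 hY w hwY x (hXY hx) hwx

theorem mu_subset : mu τ M X ⊆ M := fun _ hx => hx.1.1

theorem indep_mu : indep τ (mu τ M X) :=
  indep_iff.2 fun _ hx _ hy hxy => hx.2 ⟨_, hy.1, hxy⟩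

theorem subset_mu (hXM : X ⊆ M) (hX : indep τ X) : X ⊆ mu τ M X := fun x hx =>
  ⟨mem_ind_of_indep (hXM hx) hX hx subset_rfl, fun ⟨_, hy, hxy⟩ => hy.2 (Or.inl ⟨x, hx, hxy⟩)⟩

theorem iterate_mu_subset (hLM : L ⊆ M) : ∀ i, (mu τ M)^[i] L ⊆ M
  | 0 => hLM
  | i + 1 => by rw [Function.iterate_succ_apply']; exact mu_subset

theorem iterate_mu_subset_succ (hLM : L ⊆ M) (hL : indep τ L) :
    ∀ i, (mu τ M)^[i] L ⊆ (mu τ M)^[i + 1] L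
  | 0 => subset_mu hLM hL
  | i + 1 => by
    rw [Function.iterate_succ_apply' _ (i + 1)]
    exact subset_mu (iterate_mu_subset hLM _) (by rw [Function.iterate_succ_apply']; exact indep_mu)

theorem ind_subset_of_mu_eq (hwf : M.WellFoundedOn (flip τ)) (hK : mu τ M K = K) :
    ind τ M K ⊆ K := by
  intro w hw
  refine hwf.induction hw.1 (P := fun w => w ∈ ind τ M K → w ∈ K) (fun w _ ih hw => ?_) hw
  by_contra hwK
  obtain ⟨y, hy, hwy⟩ : w ∈ pre τ (ind τ M K) := by
    by_contra hpre
    exact hwK (hK ▸ ⟨hw, hpre⟩)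
  exact hw.2 (Or.inr ⟨y, ih y hy.1 hwy hy, hwy⟩)

theorem maximalIndep_of_mu_eq (hwf : M.WellFoundedOn (flip τ)) (hK : mu τ M K = K) :
    maximalIndep τ M K := by
  refine ⟨hK ▸ mu_subset, hK ▸ indep_mu, fun w ⟨hwM, hwK⟩ hindep => hwK ?_⟩
  exact ind_subset_of_mu_eq hwf hK
    (mem_ind_of_indep hwM hindep (Or.inr rfl) Set.subset_union_left)

end Independence

theorem Set.Finite.exists_succ_eq_of_monotone {β : Type*} {M : Set β} (hM : M.Finite)
    {f : ℕ → Set β} (hf : Monotone f) (hfM : ∀ i, f i ⊆ M) : ∃ i, f (i + 1) = f i := by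
  obtain ⟨i, j, hij, hfij⟩ := hM.finite_subsets.exists_lt_map_eq_of_forall_mem hfM
  exact ⟨i, (hf (Nat.succ_le_of_lt hij)).trans hfij.ge |>.antisymm (hf i.le_succ)⟩

theorem stmt18_general {α : Type*} (ord : LinearOrder (List α))
    (τ : List α → List α → Prop)
    (hdec : ∀ x y : List α, τ x y → ord.lt y x)
    (M L : Set (List α)) (hM : M.Finite) (hLM : L ⊆ M) (hL : indep τ L) :
    ∃ i : ℕ, maximalIndep τ M ((mu τ M)^[i] L) ∧ L ⊆ (mu τ M)^[i] L := by
  let _ := ord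
  have hmono : Monotone fun i => (mu τ M)^[i] L :=
    monotone_nat_of_le_succ (iterate_mu_subset_succ hLM hL)
  obtain ⟨i, hfix⟩ := hM.exists_succ_eq_of_monotone hmono (iterate_mu_subset hLM)
  have hwf : M.WellFoundedOn (flip τ) :=
    hM.wellFoundedOn.mono (fun y x hxy => hdec x y hxy) subset_rfl
  rw [Function.iterate_succ_apply'] at hfix
  exact ⟨i, maximalIndep_of_mu_eq hwf hfix, hmono (Nat.zero_le i)⟩

theorem stmt18 {α : Type*} (ord : LinearOrder (List α))
    (hfin : ∀ w : List α, {v : List α | ord.lt v w}.Finite)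
    (τ : List α → List α → Prop)
    (hdec : ∀ x y : List α, τ x y → ord.lt y x)
    (M L : Set (List α)) (hM : M.Finite) (hLM : L ⊆ M) (hL : indep τ L) :
    ∃ i : ℕ, maximalIndep τ M ((mu τ M)^[i] L) ∧ L ⊆ (mu τ M)^[i] L :=
  stmt18_general ord τ hdec M L hM hLM hL
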